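/- In the setting of a (P2+P3, complement-of-(P2+P3))-free graph G with induced 5-cycle C on v1,...,v5, for every i in {1,...,5} the set V_{i} union V_{i,i+1} contains at most one vertex, and the set V_{i+1} union V_{i,i+1} contains at most one vertex. -/
import Mathlib


/-- `G` contains no induced subgraph isomorphic to `H`. -/
def InducedFree {α V : Type*} (G : SimpleGraph V) (H : SimpleGraph α) : Prop :=
  ∀ f : α ↪ V, ¬ (∀ a b : α, H.Adj a b ↔ G.Adj (f a) (f b))

/-- `P₂ + P₃`: the disjoint union of a 2-vertex path and a 3-vertex path. -/
def P2PlusP3 : SimpleGraph (Fin 5) :=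
  SimpleGraph.fromRel fun a b => (a = 0 ∧ b = 1) ∨ (a = 2 ∧ b = 3) ∨ (a = 3 ∧ b = 4)

/-- `VS G v S`: the vertices outside the 5-cycle `v 0, …, v 4` whose
neighbourhood on the cycle is exactly `{v i : i ∈ S}`. -/
def VS {V : Type*} (G : SimpleGraph V) (v : ZMod 5 → V) (S : Set (ZMod 5)) : Set V :=
  {x | (∀ i, x ≠ v i) ∧ ∀ i, G.Adj x (v i) ↔ i ∈ S}

lemma no_induced {V : Type*} (G : SimpleGraph V) (hG : InducedFree G P2PlusP3)
    (w : Fin 5 → V) (inj : Function.Injective w)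
    (h01 : G.Adj (w 0) (w 1)) (h23 : G.Adj (w 2) (w 3)) (h34 : G.Adj (w 3) (w 4))
    (n02 : ¬ G.Adj (w 0) (w 2)) (n03 : ¬ G.Adj (w 0) (w 3)) (n04 : ¬ G.Adj (w 0) (w 4))
    (n12 : ¬ G.Adj (w 1) (w 2)) (n13 : ¬ G.Adj (w 1) (w 3)) (n14 : ¬ G.Adj (w 1) (w 4))
    (n24 : ¬ G.Adj (w 2) (w 4)) : False := by
  refine hG ⟨w, inj⟩ ?_
  intro p q
  have s01 := h01.symm
  have s23 := h23.symm
  have s34 := h34.symm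
  have m02 : ¬ G.Adj (w 2) (w 0) := fun h => n02 h.symm
  have m03 : ¬ G.Adj (w 3) (w 0) := fun h => n03 h.symm
  have m04 : ¬ G.Adj (w 4) (w 0) := fun h => n04 h.symm
  have m12 : ¬ G.Adj (w 2) (w 1) := fun h => n12 h.symm
  have m13 : ¬ G.Adj (w 3) (w 1) := fun h => n13 h.symm
  have m14 : ¬ G.Adj (w 4) (w 1) := fun h => n14 h.symm
  have m24 : ¬ G.Adj (w 4) (w 2) := fun h => n24 h.symm
  fin_cases p <;> fin_cases q <;>
    simp_all [P2PlusP3, SimpleGraph.fromRel_adj, G.irrefl]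

lemma core {V : Type*} (G : SimpleGraph V) (hG : InducedFree G P2PlusP3)
    {x y a b c d : V} (hxy : x ≠ y)
    (dab : a ≠ b) (dac : a ≠ c) (dad : a ≠ d) (dbc : b ≠ c) (dbd : b ≠ d) (dcd : c ≠ d)
    (dxa : x ≠ a) (dxb : x ≠ b) (dxc : x ≠ c) (dxd : x ≠ d)
    (dya : y ≠ a) (dyb : y ≠ b) (dyc : y ≠ c) (dyd : y ≠ d)
    (hxa : G.Adj x a) (hya : G.Adj y a)
    (hbc : G.Adj b c) (hcd : G.Adj c d)
    (nbd : ¬ G.Adj b d) (nab : ¬ G.Adj a b) (nac : ¬ G.Adj a c)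
    (nxb : ¬ G.Adj x b) (nxc : ¬ G.Adj x c) (nxd : ¬ G.Adj x d)
    (nyb : ¬ G.Adj y b) (nyc : ¬ G.Adj y c) (nyd : ¬ G.Adj y d) : False := by
  by_cases hxy' : G.Adj x y
  · -- P2 = {x,y}, P3 = b - c - d
    refine no_induced G hG ![x, y, b, c, d] ?_ hxy' hbc hcd nxb nxc nxd nyb nyc nyd nbd
    intro p q h
    fin_cases p <;> fin_cases q <;> simp_all
  · -- P2 = {b,c}, P3 = x - a - y
    refine no_induced G hG ![b, c, x, a, y] ?_ hbc hxa hya.symm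
      (fun h => nxb h.symm) (fun h => nab h.symm) (fun h => nyb h.symm)
      (fun h => nxc h.symm) (fun h => nac h.symm) (fun h => nyc h.symm) hxy'
    intro p q h
    fin_cases p <;> fin_cases q <;> simp_all

/-- For each `i`, the sets `V_i ∪ V_{i,i+1}` and `V_{i+1} ∪ V_{i,i+1}`
each contain at most one vertex. -/
theorem stmt_12 {V : Type*} [Fintype V] (G : SimpleGraph V)
    (hG : InducedFree G P2PlusP3) (hGc : InducedFree Gᶜ P2PlusP3)
    (v : ZMod 5 → V) (hv : Function.Injective v)
    (hC : ∀ i j : ZMod 5, G.Adj (v i) (v j) ↔ j = i + 1 ∨ j = i - 1) :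
    ∀ i : ZMod 5,
      (VS G v {i} ∪ VS G v {i, i + 1}).Subsingleton ∧
      (VS G v {i + 1} ∪ VS G v {i, i + 1}).Subsingleton := by
  intro i
  have key : ∀ a b : ZMod 5, G.Adj (v (i + a)) (v (i + b)) ↔ (b = a + 1 ∨ b = a - 1) := by
    intro a b
    rw [hC, show i + a + 1 = i + (a + 1) by ring, show i + a - 1 = i + (a - 1) by ring]
    constructor
    · rintro (h | h)
      · exact Or.inl (add_left_cancel h)
      · exact Or.inr (add_left_cancel h)
    · rintro (h | h)
      · exact Or.inl (by rw [h])
      · exact Or.inr (by rw [h])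
  have vne : ∀ {a b : ZMod 5}, a ≠ b → v (i + a) ≠ v (i + b) :=
    fun hab h => hab (add_left_cancel (hv h))
  -- neighbourhood restriction shared by all three VS sets involved
  have hsub : ∀ x : V, (x ∈ VS G v {i} ∨ x ∈ VS G v {i + 1} ∨ x ∈ VS G v {i, i + 1}) →
      ∀ j : ZMod 5, G.Adj x (v (i + j)) → j = 0 ∨ j = 1 := by
    rintro x (⟨h1, h2⟩ | ⟨h1, h2⟩ | ⟨h1, h2⟩) j hj <;> have h := (h2 _).1 hj <;>
      simp only [Set.mem_singleton_iff, Set.mem_insert_iff] at h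
    · exact Or.inl (by simpa using add_left_cancel (h.trans (add_zero i).symm))
    · exact Or.inr (add_left_cancel h)
    · rcases h with h | h
      · exact Or.inl (by simpa using add_left_cancel (h.trans (add_zero i).symm))
      · exact Or.inr (add_left_cancel h)
  constructor
  · intro x hx y hy
    by_contra hne
    have hx' : (∀ j, x ≠ v j) ∧ G.Adj x (v (i + 0)) ∧ ∀ j, G.Adj x (v (i + j)) → j = 0 ∨ j = 1 := by
      rcases hx with h | h
      · exact ⟨h.1, (h.2 _).2 (by simp), hsub x (Or.inl h)⟩
      · exact ⟨h.1, (h.2 _).2 (by simp), hsub x (Or.inr (Or.inr h))⟩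
    have hy' : (∀ j, y ≠ v j) ∧ G.Adj y (v (i + 0)) ∧ ∀ j, G.Adj y (v (i + j)) → j = 0 ∨ j = 1 := by
      rcases hy with h | h
      · exact ⟨h.1, (h.2 _).2 (by simp), hsub y (Or.inl h)⟩
      · exact ⟨h.1, (h.2 _).2 (by simp), hsub y (Or.inr (Or.inr h))⟩
    refine core G hG hne (vne (by decide)) (vne (by decide)) (vne (by decide))
      (vne (by decide)) (vne (by decide)) (vne (by decide))
      (hx'.1 _) (hx'.1 _) (hx'.1 _) (hx'.1 _) (hy'.1 _) (hy'.1 _) (hy'.1 _) (hy'.1 _)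
      hx'.2.1 hy'.2.1
      ((key 2 3).2 (Or.inl (by decide))) ((key 3 4).2 (Or.inl (by decide)))
      (fun h => by rcases (key 2 4).1 h with h | h <;> revert h <;> decide)
      (fun h => by rcases (key 0 2).1 h with h | h <;> revert h <;> decide)
      (fun h => by rcases (key 0 3).1 h with h | h <;> revert h <;> decide)
      (fun h => by rcases hx'.2.2 2 h with h | h <;> revert h <;> decide)
      (fun h => by rcases hx'.2.2 3 h with h | h <;> revert h <;> decide)
      (fun h => by rcases hx'.2.2 4 h with h | h <;> revert h <;> decide)
      (fun h => by rcases hy'.2.2 2 h with h | h <;> revert h <;> decide)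
      (fun h => by rcases hy'.2.2 3 h with h | h <;> revert h <;> decide)
      (fun h => by rcases hy'.2.2 4 h with h | h <;> revert h <;> decide)
  · intro x hx y hy
    by_contra hne
    have hx' : (∀ j, x ≠ v j) ∧ G.Adj x (v (i + 1)) ∧ ∀ j, G.Adj x (v (i + j)) → j = 0 ∨ j = 1 := by
      rcases hx with h | h
      · exact ⟨h.1, (h.2 _).2 (by simp), hsub x (Or.inr (Or.inl h))⟩
      · exact ⟨h.1, (h.2 _).2 (by simp), hsub x (Or.inr (Or.inr h))⟩
    have hy' : (∀ j, y ≠ v j) ∧ G.Adj y (v (i + 1)) ∧ ∀ j, G.Adj y (v (i + j)) → j = 0 ∨ j = 1 := by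
      rcases hy with h | h
      · exact ⟨h.1, (h.2 _).2 (by simp), hsub y (Or.inr (Or.inl h))⟩
      · exact ⟨h.1, (h.2 _).2 (by simp), hsub y (Or.inr (Or.inr h))⟩
    refine core G hG hne (vne (by decide)) (vne (by decide)) (vne (by decide))
      (vne (by decide)) (vne (by decide)) (vne (by decide))
      (hx'.1 _) (hx'.1 _) (hx'.1 _) (hx'.1 _) (hy'.1 _) (hy'.1 _) (hy'.1 _) (hy'.1 _)
      hx'.2.1 hy'.2.1
      ((key 4 3).2 (Or.inr (by decide))) ((key 3 2).2 (Or.inr (by decide)))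
      (fun h => by rcases (key 4 2).1 h with h | h <;> revert h <;> decide)
      (fun h => by rcases (key 1 4).1 h with h | h <;> revert h <;> decide)
      (fun h => by rcases (key 1 3).1 h with h | h <;> revert h <;> decide)
      (fun h => by rcases hx'.2.2 4 h with h | h <;> revert h <;> decide)
      (fun h => by rcases hx'.2.2 3 h with h | h <;> revert h <;> decide)
      (fun h => by rcases hx'.2.2 2 h with h | h <;> revert h <;> decide)
      (fun h => by rcases hy'.2.2 4 h with h | h <;> revert h <;> decide)
      (fun h => by rcases hy'.2.2 3 h with h | h <;> revert h <;> decide)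
      (fun h => by rcases hy'.2.2 2 h with h | h <;> revert h <;> decide)
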